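/- Let ψ ∈ C²(ℝ³) with bounded first and second derivatives, v₁ ≠ v₂ ∈ ℝ³, η = (v₁-v₂)/|v₁-v₂|, θ ∈ [0,π], m = (v₁+v₂)/2, and for unit η⊥ ⊥ η set v_i' = m - (-1)^i (|v₁-v₂|/2)(sinθ·η⊥ + cosθ·η). Then, integrating η⊥ over the unit circle S¹_η perpendicular to η, |∫_{S¹_η} (ψ(v₁') + ψ(v₂') - ψ(v₁) - ψ(v₂)) dη⊥| ≤ C sin²(θ/2)(‖∇ψ‖_∞ |v₁-v₂| + ‖∇²ψ‖_∞ |v₁-v₂|²) for a universal constant C. -/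

import Mathlib

open Real MeasureTheory
open scoped RealInnerProductSpace

/-!
Write `v₁, v₂ = m ± (d/2) η` and `v₁', v₂' = m ± (d/2) w`. Taylor expansion of `ψ` to second
order at `v₁` and at `v₂` reduces `ψ(v₁') + ψ(v₂') - ψ(v₁) - ψ(v₂)` to the linear term
`(Dψ(v₁) - Dψ(v₂))((d/2)(w - η))`, up to an error `O(‖D²ψ‖ d² ‖w - η‖²)` with
`‖w - η‖² = 4 sin²(θ/2)`. Over the circle the components of `w - η` perpendicular to `η` average
out, so the linear term integrates to `π d (cos θ - 1) (Dψ(v₁) - Dψ(v₂)) η`, and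
`1 - cos θ = 2 sin²(θ/2)` makes it of size `sin²(θ/2) ‖∇ψ‖_∞ d` as well.
-/

theorem norm_gradient {𝕜 F : Type*} [RCLike 𝕜] [NormedAddCommGroup F] [InnerProductSpace 𝕜 F]
    [CompleteSpace F] (f : F → 𝕜) (x : F) : ‖gradient f x‖ = ‖fderiv 𝕜 f x‖ :=
  (InnerProductSpace.toDual 𝕜 F).symm.norm_map _

theorem one_sub_cos_eq_two_mul_sin_half_sq (θ : ℝ) : 1 - cos θ = 2 * sin (θ / 2) ^ 2 := by
  have h := cos_sq (θ / 2)
  rw [show 2 * (θ / 2) = θ by ring] at h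
  linarith [sin_sq_add_cos_sq (θ / 2)]

section Taylor

variable {E F : Type*} [NormedAddCommGroup E] [NormedSpace ℝ E]
  [NormedAddCommGroup F] [NormedSpace ℝ F]

theorem norm_sub_sub_fderiv_le_of_norm_fderiv_fderiv_le {f : E → F} {M : ℝ}
    (hf : Differentiable ℝ f) (hf' : Differentiable ℝ (fderiv ℝ f))
    (hM : ∀ x, ‖fderiv ℝ (fderiv ℝ f) x‖ ≤ M) (a b : E) :
    ‖f b - f a - fderiv ℝ f a (b - a)‖ ≤ M * ‖b - a‖ ^ 2 := by
  have hM₀ : 0 ≤ M := (norm_nonneg (fderiv ℝ (fderiv ℝ f) a)).trans (hM a)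
  rw [sq, ← mul_assoc]
  refine (convex_segment a b).norm_image_sub_le_of_norm_fderiv_le' (fun y _ => hf y)
    (fun x hx => ?_) (left_mem_segment ℝ a b) (right_mem_segment ℝ a b)
  calc ‖fderiv ℝ f x - fderiv ℝ f a‖ ≤ M * ‖x - a‖ :=
        convex_univ.norm_image_sub_le_of_norm_fderiv_le (fun y _ => hf' y) (fun y _ => hM y)
          (Set.mem_univ a) (Set.mem_univ x)
    _ ≤ M * ‖b - a‖ := by gcongr; exact norm_sub_le_of_mem_segment hx

theorem abs_collision_sub_fderiv_le {ψ : E → ℝ} {M : ℝ}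
    (hψ : Differentiable ℝ ψ) (hψ' : Differentiable ℝ (fderiv ℝ ψ))
    (hM : ∀ x, ‖fderiv ℝ (fderiv ℝ ψ) x‖ ≤ M) (m w η : E) (r : ℝ) :
    |ψ (m + r • w) + ψ (m - r • w) - ψ (m + r • η) - ψ (m - r • η) -
        (fderiv ℝ ψ (m + r • η) - fderiv ℝ ψ (m - r • η)) (r • (w - η))| ≤
      2 * M * ‖r • (w - η)‖ ^ 2 := by
  have taylor := norm_sub_sub_fderiv_le_of_norm_fderiv_fderiv_le hψ hψ' hM
  have h₁ := taylor (m + r • η) (m + r • w)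
  have h₂ := taylor (m - r • η) (m - r • w)
  rw [show m + r • w - (m + r • η) = r • (w - η) by module] at h₁
  rw [show m - r • w - (m - r • η) = -(r • (w - η)) by module, norm_neg, map_neg] at h₂
  rw [Real.norm_eq_abs] at h₁ h₂
  calc _ = |(ψ (m + r • w) - ψ (m + r • η) - fderiv ℝ ψ (m + r • η) (r • (w - η))) +
          (ψ (m - r • w) - ψ (m - r • η) - -fderiv ℝ ψ (m - r • η) (r • (w - η)))| := by
        rw [sub_apply]; ring_nf
    _ ≤ _ := (abs_add_le _ _).trans (by linarith)

end Taylor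

section ScatteredDirection

variable {E : Type*} [NormedAddCommGroup E] [NormedSpace ℝ E]

noncomputable def scatteredDirection (η u₁ u₂ : E) (θ t : ℝ) : E :=
  sin θ • (cos t • u₁ + sin t • u₂) + cos θ • η

theorem continuous_scatteredDirection (η u₁ u₂ : E) (θ : ℝ) :
    Continuous (scatteredDirection η u₁ u₂ θ) := by
  unfold scatteredDirection; fun_prop

theorem integral_scatteredDirection_sub [CompleteSpace E] (η u₁ u₂ : E) (θ : ℝ) :
    ∫ t in (0 : ℝ)..2 * π, (scatteredDirection η u₁ u₂ θ t - η) = (2 * π * (cos θ - 1)) • η := by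
  have h : ∀ t, scatteredDirection η u₁ u₂ θ t - η =
      (cos t • sin θ • u₁ + sin t • sin θ • u₂) + (cos θ - 1) • η := fun t => by
    unfold scatteredDirection; module
  simp_rw [h]
  have hint {f : ℝ → E} (hf : Continuous f) : IntervalIntegrable f volume 0 (2 * π) :=
    hf.intervalIntegrable _ _
  rw [intervalIntegral.integral_add (hint (by fun_prop)) (hint (by fun_prop)),
    intervalIntegral.integral_add (hint (by fun_prop)) (hint (by fun_prop)),
    intervalIntegral.integral_smul_const, intervalIntegral.integral_smul_const,
    intervalIntegral.integral_const, integral_cos, integral_sin, sin_two_pi, sin_zero,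
    cos_two_pi, cos_zero]
  module

end ScatteredDirection

section Orthonormal

variable {E : Type*} [NormedAddCommGroup E] [InnerProductSpace ℝ E]

theorem norm_cos_smul_add_sin_smul {u₁ u₂ : E} (hu₁ : ‖u₁‖ = 1) (hu₂ : ‖u₂‖ = 1)
    (hu₁u₂ : ⟪u₁, u₂⟫ = 0) (t : ℝ) : ‖cos t • u₁ + sin t • u₂‖ = 1 := by
  have h := norm_add_sq_eq_norm_sq_add_norm_sq_real
    (by rw [real_inner_smul_left, real_inner_smul_right, hu₁u₂]; ring :
      ⟪cos t • u₁, sin t • u₂⟫ = 0)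
  simp only [norm_smul, hu₁, hu₂, Real.norm_eq_abs, mul_one] at h
  nlinarith [cos_sq_add_sin_sq t, abs_mul_abs_self (cos t), abs_mul_abs_self (sin t),
    norm_nonneg (cos t • u₁ + sin t • u₂)]

theorem norm_scatteredDirection_sub_sq {η u₁ u₂ : E} (hη : ‖η‖ = 1) (hu₁ : ‖u₁‖ = 1)
    (hu₂ : ‖u₂‖ = 1) (hηu₁ : ⟪η, u₁⟫ = 0) (hηu₂ : ⟪η, u₂⟫ = 0) (hu₁u₂ : ⟪u₁, u₂⟫ = 0)
    (θ t : ℝ) : ‖scatteredDirection η u₁ u₂ θ t - η‖ ^ 2 = 4 * sin (θ / 2) ^ 2 := by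
  set p := cos t • u₁ + sin t • u₂
  have hp : ‖p‖ = 1 := norm_cos_smul_add_sin_smul hu₁ hu₂ hu₁u₂ t
  have hpη : ⟪sin θ • p, (cos θ - 1) • η⟫ = 0 := by
    rw [real_inner_smul_left, real_inner_smul_right, inner_add_left, real_inner_smul_left,
      real_inner_smul_left, real_inner_comm η u₁, real_inner_comm η u₂, hηu₁, hηu₂]
    ring
  have h := norm_add_sq_eq_norm_sq_add_norm_sq_real hpη
  rw [show scatteredDirection η u₁ u₂ θ t - η = sin θ • p + (cos θ - 1) • η by
    unfold scatteredDirection; module]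
  simp only [norm_smul, hp, hη, Real.norm_eq_abs, mul_one] at h
  rw [sq, h, abs_mul_abs_self, abs_mul_abs_self]
  nlinarith [sin_sq_add_cos_sq θ, one_sub_cos_eq_two_mul_sin_half_sq θ]

end Orthonormal

theorem abs_integral_collision_le {E : Type*} [NormedAddCommGroup E] [InnerProductSpace ℝ E]
    [CompleteSpace E] {ψ : E → ℝ} {G₁ G₂ d : ℝ} (hψ : Differentiable ℝ ψ)
    (hψ' : Differentiable ℝ (fderiv ℝ ψ)) (hG₁ : ∀ x, ‖fderiv ℝ ψ x‖ ≤ G₁)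
    (hG₂ : ∀ x, ‖fderiv ℝ (fderiv ℝ ψ) x‖ ≤ G₂) (hd : 0 ≤ d) {m η u₁ u₂ : E} (hη : ‖η‖ = 1)
    (hu₁ : ‖u₁‖ = 1) (hu₂ : ‖u₂‖ = 1) (hηu₁ : ⟪η, u₁⟫ = 0) (hηu₂ : ⟪η, u₂⟫ = 0)
    (hu₁u₂ : ⟪u₁, u₂⟫ = 0) (θ : ℝ) :
    |∫ t in (0 : ℝ)..2 * π,
        (ψ (m + (d / 2) • scatteredDirection η u₁ u₂ θ t) +
          ψ (m - (d / 2) • scatteredDirection η u₁ u₂ θ t) -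
          ψ (m + (d / 2) • η) - ψ (m - (d / 2) • η))| ≤
      4 * π * sin (θ / 2) ^ 2 * (G₁ * d + G₂ * d ^ 2) := by
  set w := scatteredDirection η u₁ u₂ θ
  set s := sin (θ / 2) ^ 2
  set A := fderiv ℝ ψ (m + (d / 2) • η) - fderiv ℝ ψ (m - (d / 2) • η)
  have hwc : Continuous w := continuous_scatteredDirection η u₁ u₂ θ
  have hw : Continuous fun t => (d / 2) • (w t - η) := by fun_prop
  have hF : IntervalIntegrable (fun t => ψ (m + (d / 2) • w t) + ψ (m - (d / 2) • w t) -
      ψ (m + (d / 2) • η) - ψ (m - (d / 2) • η)) volume 0 (2 * π) :=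
    (by have := hψ.continuous; fun_prop : Continuous _).intervalIntegrable _ _
  set F := fun t => ψ (m + (d / 2) • w t) + ψ (m - (d / 2) • w t) -
    ψ (m + (d / 2) • η) - ψ (m - (d / 2) • η)
  have hL : IntervalIntegrable (fun t => A ((d / 2) • (w t - η))) volume 0 (2 * π) :=
    (A.continuous.comp hw).intervalIntegrable _ _
  have hlinear : ∫ t in (0 : ℝ)..2 * π, A ((d / 2) • (w t - η)) = -(2 * π * d * s) * A η := by
    rw [A.intervalIntegral_comp_comm (hw.intervalIntegrable _ _), intervalIntegral.integral_smul,
      integral_scatteredDirection_sub, smul_smul, map_smul, smul_eq_mul,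
      ← neg_sub, one_sub_cos_eq_two_mul_sin_half_sq]
    ring
  have hAη : |A η| ≤ 2 * G₁ := by
    calc |A η| ≤ ‖A‖ * ‖η‖ := A.le_opNorm η
      _ ≤ G₁ + G₁ := by
        rw [hη, mul_one]
        exact (norm_sub_le _ _).trans (add_le_add (hG₁ _) (hG₁ _))
      _ = 2 * G₁ := by ring
  have hremainder : ∀ t, ‖F t - A ((d / 2) • (w t - η))‖ ≤ 2 * G₂ * d ^ 2 * s := fun t => by
    have h := abs_collision_sub_fderiv_le hψ hψ' hG₂ m (w t) η (d / 2)
    rw [norm_smul, mul_pow, norm_scatteredDirection_sub_sq hη hu₁ hu₂ hηu₁ hηu₂ hu₁u₂,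
      Real.norm_eq_abs, sq_abs] at h
    rw [Real.norm_eq_abs]
    linarith
  calc |∫ t in (0 : ℝ)..2 * π, F t|
      = |(∫ t in (0 : ℝ)..2 * π, A ((d / 2) • (w t - η))) +
          ∫ t in (0 : ℝ)..2 * π, (F t - A ((d / 2) • (w t - η)))| := by
        rw [intervalIntegral.integral_sub hF hL, add_sub_cancel]
    _ ≤ 2 * π * d * s * (2 * G₁) + 2 * G₂ * d ^ 2 * s * |2 * π - 0| := by
        refine (abs_add_le _ _).trans (add_le_add ?_ ?_)
        · rw [hlinear, abs_mul, abs_neg, abs_of_nonneg (by positivity)]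
          gcongr
        · exact intervalIntegral.norm_integral_le_of_norm_le_const fun t _ => hremainder t
    _ = 4 * π * s * (G₁ * d + G₂ * d ^ 2) := by
        rw [sub_zero, abs_of_nonneg (by positivity)]; ring

/-- Second-order Taylor estimate for the circle-averaged collision difference:
there is a universal constant `C` such that the integral over the circle of
unit vectors perpendicular to `η` of `ψ(v₁') + ψ(v₂') - ψ(v₁) - ψ(v₂)` is bounded by
`C sin²(θ/2)(‖∇ψ‖_∞ |v₁-v₂| + ‖∇²ψ‖_∞ |v₁-v₂|²)`. -/
theorem circle_average_collision_estimate :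
    ∃ C > 0, ∀ (ψ : EuclideanSpace ℝ (Fin 3) → ℝ), ContDiff ℝ 2 ψ →
      ∀ (G₁ G₂ : ℝ),
        (∀ v, ‖gradient ψ v‖ ≤ G₁) →
        (∀ v, ‖fderiv ℝ (fun w => fderiv ℝ ψ w) v‖ ≤ G₂) →
        ∀ (v₁ v₂ η u₁ u₂ : EuclideanSpace ℝ (Fin 3)), v₁ ≠ v₂ →
          η = ‖v₁ - v₂‖⁻¹ • (v₁ - v₂) →
          ‖u₁‖ = 1 → ‖u₂‖ = 1 → ⟪η, u₁⟫ = 0 → ⟪η, u₂⟫ = 0 → ⟪u₁, u₂⟫ = 0 →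
          ∀ θ ∈ Set.Icc (0 : ℝ) π,
            |∫ t in (0 : ℝ)..(2 * π),
                (ψ ((1 / 2 : ℝ) • (v₁ + v₂) + (‖v₁ - v₂‖ / 2) •
                    (Real.sin θ • (Real.cos t • u₁ + Real.sin t • u₂) + Real.cos θ • η)) +
                 ψ ((1 / 2 : ℝ) • (v₁ + v₂) - (‖v₁ - v₂‖ / 2) •
                    (Real.sin θ • (Real.cos t • u₁ + Real.sin t • u₂) + Real.cos θ • η)) -
                 ψ v₁ - ψ v₂)| ≤
              C * Real.sin (θ / 2) ^ 2 * (G₁ * ‖v₁ - v₂‖ + G₂ * ‖v₁ - v₂‖ ^ 2) := by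
  refine ⟨4 * π, by positivity, ?_⟩
  intro ψ hψ G₁ G₂ hG₁ hG₂ v₁ v₂ η u₁ u₂ hne hη hu₁ hu₂ hηu₁ hηu₂ hu₁u₂ θ _
  have hd : ‖v₁ - v₂‖ ≠ 0 := norm_ne_zero_iff.mpr (sub_ne_zero.mpr hne)
  have hηnorm : ‖η‖ = 1 := by rw [hη, norm_smul, norm_inv, norm_norm, inv_mul_cancel₀ hd]
  have hhalf : (‖v₁ - v₂‖ / 2) • η = (1 / 2 : ℝ) • (v₁ - v₂) := by
    rw [hη, smul_smul, div_mul_eq_mul_div, mul_inv_cancel₀ hd]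
  have hv₁ : (1 / 2 : ℝ) • (v₁ + v₂) + (‖v₁ - v₂‖ / 2) • η = v₁ := by rw [hhalf]; module
  have hv₂ : (1 / 2 : ℝ) • (v₁ + v₂) - (‖v₁ - v₂‖ / 2) • η = v₂ := by rw [hhalf]; module
  have h := abs_integral_collision_le (m := (1 / 2 : ℝ) • (v₁ + v₂)) (θ := θ)
    (hψ.differentiable two_ne_zero)
    ((hψ.fderiv_right (m := 1) le_rfl).differentiable one_ne_zero)
    (fun x => (norm_gradient ψ x).symm.trans_le (hG₁ x)) hG₂ (norm_nonneg (v₁ - v₂))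
    hηnorm hu₁ hu₂ hηu₁ hηu₂ hu₁u₂
  rwa [hv₁, hv₂] at h
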